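/- Let r ≥ 2, and let X and Y be edge-subgraphs of K_{r,r} with partite sets A_X ⊔ B_X and A_Y ⊔ B_Y respectively, such that 2·(δ(X) + δ(Y)) ≥ 3r + 2. Let σ : V(X) → V(Y) be a bijection and suppose u ∈ A_Y and v ∈ B_Y are such that u′ = σ⁻¹(u) ∈ A_X, v′ = σ⁻¹(v) ∈ B_X, u′ and v′ are adjacent in X, and |(A_X \ {u′}) ∩ σ⁻¹(A_Y \ {u})| ≥ (r−1)/2. Then there exists a bijection μ : V(X) → V(Y) in the same connected component of FS(X,Y) as σ such that μ(A_X) = A_Y, μ(B_X) = B_Y, μ(u′) = u, and μ(v′) = v. -/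

import Mathlib

open SimpleGraph

/-- The friends-and-strangers graph `FS X Y` of two graphs `X`, `Y`: vertices are the
bijections from `V(X)` to `V(Y)`, and `σ`, `τ` are adjacent iff they agree everywhere except
at two vertices `a`, `b` adjacent in `X` whose images under `σ` are adjacent in `Y`,
with `τ a = σ b` and `τ b = σ a`. -/
def FS {V W : Type*} (X : SimpleGraph V) (Y : SimpleGraph W) :
    SimpleGraph (V ≃ W) where
  Adj σ τ := ∃ a b : V, X.Adj a b ∧ Y.Adj (σ a) (σ b) ∧
      τ a = σ b ∧ τ b = σ a ∧ ∀ w : V, w ≠ a → w ≠ b → τ w = σ w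
  symm := by
    refine ⟨?_⟩
    rintro σ τ ⟨a, b, hX, hY, h1, h2, h3⟩
    exact ⟨a, b, hX, by rw [h1, h2]; exact hY.symm, h2.symm, h1.symm,
      fun w hwa hwb => (h3 w hwa hwb).symm⟩
  loopless := by
    refine ⟨?_⟩
    rintro σ ⟨a, b, hX, _, h1, _, _⟩
    exact hX.ne (σ.injective h1)

/-- The minimum degree of a graph (stated via `Set.ncard`, so that no decidability
assumptions are required). -/
noncomputable def minDeg {V : Type*} (G : SimpleGraph V) : ℕ :=
  ⨅ v : V, (G.neighborSet v).ncard

/-- Vertices `u`, `v` of `Y` are `(X,Y)`-exchangeable from `σ` if `σ` and `(u v) ∘ σ`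
lie in the same connected component of `FS X Y`. -/
def Exchangeable {V W : Type*} (X : SimpleGraph V) (Y : SimpleGraph W)
    (σ : V ≃ W) (u v : W) : Prop :=
  letI := Classical.decEq W
  (FS X Y).Reachable σ (σ.trans (Equiv.swap u v))

open Finset

/-!
Call a vertex *crossed* under `τ` if `τ` moves it to the other side; there are as many crossed
left vertices as crossed right ones, and it suffices to reduce their number by moves of `FS X Y`
that fix `u'` and `v'`. If a crossed left `a` and a crossed right `b` are adjacent in `X` with
`τ a, τ b` adjacent in `Y`, swap them. Otherwise pick `a` and `b` so that `a` has at most as many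
`X`-neighbours among crossed vertices as `b` (double counting). The degree condition then gives
two uncrossed left `x` with `b ~ x` in `X` and `τ a ~ τ x` in `Y`, and for each such `x` two
uncrossed right `y` with `a ~ y`, `x ~ y` in `X` and `τ b ~ τ y`, `τ x ~ τ y` in `Y`; three swaps
along `x y a b` then uncross `a` and `b`. Having two candidates each lets us avoid `u'` and `v'`.
-/

namespace FriendsAndStrangers

section FinsetCounting

variable {ι κ : Type*}

theorem card_filter_add_card_filter_le_card_add_card_filter_and [DecidableEq ι] (s : Finset ι)
    (p q : ι → Prop) [DecidablePred p] [DecidablePred q] :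
    #{x ∈ s | p x} + #{x ∈ s | q x} ≤ #s + #{x ∈ s | p x ∧ q x} := by
  rw [filter_and, ← card_union_add_card_inter, ← filter_or]
  gcongr
  exact filter_subset _ _

theorem card_filter_add_card_filter_le_card [DecidableEq ι] {s : Finset ι} {p q : ι → Prop}
    [DecidablePred p] [DecidablePred q] (h : ∀ x ∈ s, p x → ¬q x) :
    #{x ∈ s | p x} + #{x ∈ s | q x} ≤ #s := by
  rw [← card_union_of_disjoint (disjoint_filter.2 h), ← filter_or]
  exact card_filter_le _ _

theorem card_filter_le_card_filter_add_card_filter [Fintype ι] [DecidableEq ι]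
    {s t : Finset ι} {p : ι → Prop} [DecidablePred p] (h : ∀ x, p x → x ∈ s ∨ x ∈ t) :
    #{x | p x} ≤ #{x ∈ s | p x} + #{x ∈ t | p x} := by
  refine (card_le_card fun x hx ↦ ?_).trans (card_union_le _ _)
  have hx := (mem_filter.1 hx).2
  rcases h x hx with h | h <;> simp [h, hx]

theorem exists_card_bipartiteAbove_le_card_bipartiteBelow {s : Finset ι} {t : Finset κ}
    (r : ι → κ → Prop) [∀ a b, Decidable (r a b)] (hs : s.Nonempty) (hst : #s = #t) :
    ∃ a ∈ s, ∃ b ∈ t, #(t.bipartiteAbove r a) ≤ #(s.bipartiteBelow r b) := by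
  obtain ⟨a, ha, hmin⟩ := s.exists_min_image (fun a ↦ #(t.bipartiteAbove r a)) hs
  obtain ⟨b, hb, hmax⟩ := t.exists_max_image (fun b ↦ #(s.bipartiteBelow r b))
    (card_pos.1 (hst ▸ card_pos.2 hs))
  refine ⟨a, ha, b, hb, le_of_mul_le_mul_left ?_ (card_pos.2 hs)⟩
  calc #s * #(t.bipartiteAbove r a) ≤ ∑ a ∈ s, #(t.bipartiteAbove r a) := by
        simpa using card_nsmul_le_sum s _ _ hmin
    _ = ∑ b ∈ t, #(s.bipartiteBelow r b) :=
        sum_card_bipartiteAbove_eq_sum_card_bipartiteBelow r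
    _ ≤ #s * #(s.bipartiteBelow r b) := by
        simpa [hst] using sum_le_card_nsmul t _ _ hmax

end FinsetCounting

open Classical

theorem fs_adj_swap_trans {V W : Type*} [DecidableEq V] {X : SimpleGraph V} {Y : SimpleGraph W}
    {τ : V ≃ W} {a b : V} (hX : X.Adj a b) (hY : Y.Adj (τ a) (τ b)) :
    (FS X Y).Adj τ ((Equiv.swap a b).trans τ) :=
  ⟨a, b, hX, hY, by simp, by simp, fun w hwa hwb ↦ by simp [Equiv.swap_apply_of_ne_of_ne hwa hwb]⟩

theorem minDeg_le_card_adj {V : Type*} [Fintype V] (G : SimpleGraph V) [DecidableRel G.Adj]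
    (x : V) : minDeg G ≤ #{y | G.Adj x y} := by
  have : (G.neighborSet x).ncard = #{y | G.Adj x y} := by
    rw [Set.ncard_eq_toFinset_card']; congr 1; ext; simp
  exact this ▸ ciInf_le (OrderBot.bddBelow _) x

section Sides

variable {α : Type*} [Fintype α]

/-- The vertices on side `p` that `τ` sends to side `q`; the side of a vertex is `isLeft`. -/
def sideClass (τ : α ⊕ α ≃ α ⊕ α) (p q : Bool) : Finset (α ⊕ α) :=
  {x | x.isLeft = p ∧ (τ x).isLeft = q}

theorem mem_sideClass {τ : α ⊕ α ≃ α ⊕ α} {p q : Bool} {x : α ⊕ α} :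
    x ∈ sideClass τ p q ↔ x.isLeft = p ∧ (τ x).isLeft = q := by
  simp [sideClass]

theorem ne_of_mem_sideClass {τ : α ⊕ α ≃ α ⊕ α} {p q p' q' : Bool} {x y : α ⊕ α}
    (hx : x ∈ sideClass τ p q) (hy : y ∈ sideClass τ p' q') (h : p ≠ p' ∨ q ≠ q') : x ≠ y := by
  rintro rfl
  rw [mem_sideClass] at hx hy
  grind

theorem card_filter_isLeft_eq (p : Bool) : #{x : α ⊕ α | x.isLeft = p} = Fintype.card α := by
  have key : ∀ f : α ↪ α ⊕ α, (∀ x, x.isLeft = p ↔ x ∈ Set.range f) →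
      #{x : α ⊕ α | x.isLeft = p} = Fintype.card α := fun f hf ↦ by
    rw [← card_univ, ← card_map f]; congr 1; ext x; simp [hf, eq_comm]
  cases p
  · exact key .inr fun x ↦ by cases x <;> simp
  · exact key .inl fun x ↦ by cases x <;> simp

theorem card_sideClass_add_card_sideClass_target (τ : α ⊕ α ≃ α ⊕ α) (p : Bool) :
    #(sideClass τ p true) + #(sideClass τ p false) = Fintype.card α := by
  rw [← card_filter_isLeft_eq p, ← card_filter_add_card_filter_not (s := {x | x.isLeft = p})
    (p := fun x ↦ (τ x).isLeft = true), filter_filter, filter_filter]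
  simp only [Bool.not_eq_true, sideClass]

theorem card_sideClass_add_card_sideClass_source (τ : α ⊕ α ≃ α ⊕ α) (q : Bool) :
    #(sideClass τ true q) + #(sideClass τ false q) = Fintype.card α := by
  have : #{x | (τ x).isLeft = q} = Fintype.card α :=
    (card_equiv τ fun x ↦ by simp).trans (card_filter_isLeft_eq q)
  rw [← this, ← card_filter_add_card_filter_not (s := {x | (τ x).isLeft = q})
    (p := fun x ↦ x.isLeft = true), filter_filter, filter_filter]
  simp only [Bool.not_eq_true, sideClass, and_comm]

theorem card_sideClass_true_false (τ : α ⊕ α ≃ α ⊕ α) :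
    #(sideClass τ true false) = #(sideClass τ false true) := by
  have := card_sideClass_add_card_sideClass_target τ true
  have := card_sideClass_add_card_sideClass_target τ false
  have := card_sideClass_add_card_sideClass_source τ true
  have := card_sideClass_add_card_sideClass_source τ false
  omega

variable {X Y : SimpleGraph (α ⊕ α)}

omit [Fintype α] in
theorem isLeft_ne_of_adj (hX : X ≤ completeBipartiteGraph α α) {x y : α ⊕ α} (h : X.Adj x y) :
    x.isLeft ≠ y.isLeft := by
  rcases hX h with ⟨hx, hy⟩ | ⟨hx, hy⟩ <;> cases x <;> cases y <;> simp_all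

theorem minDeg_le_card_sideClass_adj (hX : X ≤ completeBipartiteGraph α α)
    (τ : α ⊕ α ≃ α ⊕ α) {x : α ⊕ α} {s : Bool} (hs : x.isLeft = !s) :
    minDeg X ≤
      #{y ∈ sideClass τ s true | X.Adj x y} + #{y ∈ sideClass τ s false | X.Adj x y} := by
  refine (minDeg_le_card_adj X x).trans
    (card_filter_le_card_filter_add_card_filter fun y hy ↦ ?_)
  have hys : y.isLeft = s := by
    rw [Bool.eq_not_of_ne (isLeft_ne_of_adj hX hy).symm, hs, Bool.not_not]
  rw [mem_sideClass, mem_sideClass]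
  cases (τ y).isLeft <;> simp [hys]

theorem minDeg_le_card_sideClass_adj_apply (hY : Y ≤ completeBipartiteGraph α α)
    (τ : α ⊕ α ≃ α ⊕ α) {x : α ⊕ α} {t : Bool} (ht : (τ x).isLeft = !t) :
    minDeg Y ≤ #{y ∈ sideClass τ true t | Y.Adj (τ x) (τ y)} +
      #{y ∈ sideClass τ false t | Y.Adj (τ x) (τ y)} := by
  have hcard : #{y | Y.Adj (τ x) (τ y)} = #{z | Y.Adj (τ x) z} := card_equiv τ (by simp)
  refine (minDeg_le_card_adj Y (τ x)).trans
    (hcard ▸ card_filter_le_card_filter_add_card_filter fun y hy ↦ ?_)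
  have hyt : (τ y).isLeft = t := by
    rw [Bool.eq_not_of_ne (isLeft_ne_of_adj hY hy).symm, ht, Bool.not_not]
  rw [mem_sideClass, mem_sideClass]
  cases y.isLeft <;> simp [hyt]

theorem card_sideClass_true_false_lt {τ τ' : α ⊕ α ≃ α ⊕ α} {a : α ⊕ α}
    (ha : a ∈ sideClass τ true false) (ha' : (τ' a).isLeft)
    (h : ∀ w, w.isLeft → w ≠ a → (τ' w).isLeft = (τ w).isLeft) :
    #(sideClass τ' true false) < #(sideClass τ true false) := by
  refine (card_le_card fun w hw ↦ ?_).trans_lt (card_erase_lt_of_mem ha)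
  rw [mem_sideClass] at hw
  have hwa : w ≠ a := by rintro rfl; simp_all
  rw [mem_erase, mem_sideClass, ← h w hw.1 hwa]
  exact ⟨hwa, hw⟩

theorem exists_reachable_swap {τ : α ⊕ α ≃ α ⊕ α} {a b : α ⊕ α}
    (ha : a ∈ sideClass τ true false) (hb : b ∈ sideClass τ false true)
    (hab : X.Adj a b) (hab' : Y.Adj (τ a) (τ b)) :
    ∃ τ', (FS X Y).Reachable τ τ' ∧ (∀ w, w ≠ a → w ≠ b → τ' w = τ w) ∧
      #(sideClass τ' true false) < #(sideClass τ true false) := by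
  rw [mem_sideClass] at ha hb
  refine ⟨(Equiv.swap a b).trans τ, (fs_adj_swap_trans hab hab').reachable,
    fun w hwa hwb ↦ by simp [Equiv.swap_apply_of_ne_of_ne hwa hwb],
    card_sideClass_true_false_lt (mem_sideClass.2 ha) (by simp [hb.2]) fun w hw hwa ↦ ?_⟩
  have hwb : w ≠ b := by rintro rfl; simp_all
  simp [Equiv.swap_apply_of_ne_of_ne hwa hwb]

/-- The swaps at `x y`, `a y`, `x b` compose to `τ ∘ (a x b y)`: `a` receives `τ x` and `b`
receives `τ y`, which lie on their sides, and `x`, `y` keep images on their own sides. -/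
theorem exists_reachable_rotation {τ : α ⊕ α ≃ α ⊕ α} {a b x y : α ⊕ α}
    (ha : a ∈ sideClass τ true false) (hb : b ∈ sideClass τ false true)
    (hx : x ∈ sideClass τ true true) (hy : y ∈ sideClass τ false false)
    (hXxy : X.Adj x y) (hYxy : Y.Adj (τ x) (τ y)) (hXay : X.Adj a y) (hYax : Y.Adj (τ a) (τ x))
    (hXbx : X.Adj b x) (hYby : Y.Adj (τ b) (τ y)) :
    ∃ τ', (FS X Y).Reachable τ τ' ∧ (∀ w, w ≠ a → w ≠ b → w ≠ x → w ≠ y → τ' w = τ w) ∧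
      #(sideClass τ' true false) < #(sideClass τ true false) := by
  have hax := ne_of_mem_sideClass ha hx (by decide)
  have hby := ne_of_mem_sideClass hb hy (by decide)
  have hab := ne_of_mem_sideClass ha hb (by decide)
  have hay := ne_of_mem_sideClass ha hy (by decide)
  have hxb := ne_of_mem_sideClass hx hb (by decide)
  have hxy := ne_of_mem_sideClass hx hy (by decide)
  rw [mem_sideClass] at ha hb hx hy
  set τ₁ := (Equiv.swap x y).trans τ
  set τ₂ := (Equiv.swap a y).trans τ₁
  set τ₃ := (Equiv.swap x b).trans τ₂
  have h₁ : (FS X Y).Adj τ τ₁ := fs_adj_swap_trans hXxy hYxy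
  have h₂ : (FS X Y).Adj τ₁ τ₂ := fs_adj_swap_trans hXay
    (by simpa [τ₁, Equiv.swap_apply_of_ne_of_ne hax hay] using hYax)
  have h₃ : (FS X Y).Adj τ₂ τ₃ := fs_adj_swap_trans hXbx.symm
    (by simpa [τ₁, τ₂, Equiv.swap_apply_of_ne_of_ne hax.symm hxy,
      Equiv.swap_apply_of_ne_of_ne hab.symm hby, Equiv.swap_apply_of_ne_of_ne hxb.symm hby]
      using hYby.symm)
  have hτ₃ : ∀ w, w ≠ a → w ≠ b → w ≠ x → w ≠ y → τ₃ w = τ w := fun w hwa hwb hwx hwy ↦ by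
    simp [τ₁, τ₂, τ₃, Equiv.swap_apply_of_ne_of_ne, hwa, hwb, hwx, hwy]
  refine ⟨τ₃, h₁.reachable.trans (h₂.reachable.trans h₃.reachable), hτ₃,
    card_sideClass_true_false_lt (mem_sideClass.2 ha) ?_ fun w hw hwa ↦ ?_⟩
  · simpa [τ₁, τ₂, τ₃, Equiv.swap_apply_of_ne_of_ne hax hab, Equiv.swap_apply_of_ne_of_ne hax hay]
      using hx.2
  · by_cases hwx : w = x
    · subst hwx
      simp [τ₁, τ₂, τ₃, Equiv.swap_apply_of_ne_of_ne hab.symm hby,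
        Equiv.swap_apply_of_ne_of_ne hxb.symm hby, hb.2, hx.2]
    · have hwb : w ≠ b := by rintro rfl; simp_all
      have hwy : w ≠ y := by rintro rfl; simp_all
      rw [hτ₃ w hwa hwb hwx hwy]

end Sides

section NoFixablePair

variable {α : Type*} [Fintype α] {X Y : SimpleGraph (α ⊕ α)} {τ : α ⊕ α ≃ α ⊕ α}
  (hX : X ≤ completeBipartiteGraph α α) (hY : Y ≤ completeBipartiteGraph α α)
  (hdeg : 3 * Fintype.card α + 2 ≤ 2 * (minDeg X + minDeg Y))
  (hfix : ∀ a ∈ sideClass τ true false, ∀ b ∈ sideClass τ false true,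
    X.Adj a b → ¬Y.Adj (τ a) (τ b))
include hfix

theorem card_adj_add_card_adj_apply_le_of_mem_true_false {a : α ⊕ α}
    (ha : a ∈ sideClass τ true false) :
    #{y ∈ sideClass τ false true | X.Adj a y} +
      #{y ∈ sideClass τ false true | Y.Adj (τ a) (τ y)} ≤ #(sideClass τ false true) :=
  card_filter_add_card_filter_le_card fun _ hy ↦ hfix a ha _ hy

theorem card_adj_add_card_adj_apply_le_of_mem_false_true {b : α ⊕ α}
    (hb : b ∈ sideClass τ false true) :
    #{x ∈ sideClass τ true false | X.Adj b x} +
      #{x ∈ sideClass τ true false | Y.Adj (τ b) (τ x)} ≤ #(sideClass τ true false) :=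
  card_filter_add_card_filter_le_card fun _ hx hXbx hYbx ↦ hfix _ hx b hb hXbx.symm hYbx.symm

include hX hY hdeg

theorem two_le_card_rotation_left {a b : α ⊕ α}
    (ha : a ∈ sideClass τ true false) (hb : b ∈ sideClass τ false true) :
    2 ≤ #{x ∈ sideClass τ true true | X.Adj b x ∧ Y.Adj (τ a) (τ x)} := by
  have ha' := mem_sideClass.1 ha
  have hb' := mem_sideClass.1 hb
  have := minDeg_le_card_sideClass_adj hX τ (s := false) ha'.1
  have := minDeg_le_card_sideClass_adj hX τ (s := true) hb'.1
  have := minDeg_le_card_sideClass_adj_apply hY τ (t := true) ha'.2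
  have := minDeg_le_card_sideClass_adj_apply hY τ (t := false) hb'.2
  have := card_adj_add_card_adj_apply_le_of_mem_true_false hfix ha
  have := card_adj_add_card_adj_apply_le_of_mem_false_true hfix hb
  have := card_filter_le (sideClass τ false false) (X.Adj a ·)
  have := card_filter_le (sideClass τ false false) (fun y ↦ Y.Adj (τ b) (τ y))
  have := card_filter_add_card_filter_le_card_add_card_filter_and (sideClass τ true true)
    (X.Adj b ·) (fun x ↦ Y.Adj (τ a) (τ x))
  have := card_sideClass_true_false τ
  have := card_sideClass_add_card_sideClass_target τ true
  have := card_sideClass_add_card_sideClass_target τ false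
  omega

theorem two_le_card_rotation_right {a b x : α ⊕ α}
    (ha : a ∈ sideClass τ true false) (hb : b ∈ sideClass τ false true)
    (hx : x ∈ sideClass τ true true)
    (hab : #{y ∈ sideClass τ false true | X.Adj a y} ≤
      #{x ∈ sideClass τ true false | X.Adj b x}) :
    2 ≤ #{y ∈ sideClass τ false false |
      X.Adj a y ∧ X.Adj x y ∧ Y.Adj (τ b) (τ y) ∧ Y.Adj (τ x) (τ y)} := by
  have ha' := mem_sideClass.1 ha
  have hb' := mem_sideClass.1 hb
  have hx' := mem_sideClass.1 hx
  have := minDeg_le_card_sideClass_adj hX τ (s := false) ha'.1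
  have := minDeg_le_card_sideClass_adj hX τ (s := false) hx'.1
  have := minDeg_le_card_sideClass_adj_apply hY τ (t := false) hb'.2
  have := minDeg_le_card_sideClass_adj_apply hY τ (t := false) hx'.2
  have := card_adj_add_card_adj_apply_le_of_mem_false_true hfix hb
  have := card_filter_le (sideClass τ false true) (X.Adj x ·)
  have := card_filter_le (sideClass τ true false) (fun y ↦ Y.Adj (τ x) (τ y))
  have := card_filter_add_card_filter_le_card_add_card_filter_and (sideClass τ false false)
    (X.Adj a ·) (fun y ↦ X.Adj x y ∧ Y.Adj (τ b) (τ y) ∧ Y.Adj (τ x) (τ y))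
  have := card_filter_add_card_filter_le_card_add_card_filter_and (sideClass τ false false)
    (X.Adj x ·) (fun y ↦ Y.Adj (τ b) (τ y) ∧ Y.Adj (τ x) (τ y))
  have := card_filter_add_card_filter_le_card_add_card_filter_and (sideClass τ false false)
    (fun y ↦ Y.Adj (τ b) (τ y)) (fun y ↦ Y.Adj (τ x) (τ y))
  have := card_sideClass_true_false τ
  have := card_sideClass_add_card_sideClass_target τ true
  have := card_sideClass_add_card_sideClass_target τ false
  omega

end NoFixablePair

section Iteration

variable {α : Type*} [Fintype α] {X Y : SimpleGraph (α ⊕ α)}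
  (hX : X ≤ completeBipartiteGraph α α) (hY : Y ≤ completeBipartiteGraph α α)
  (hdeg : 3 * Fintype.card α + 2 ≤ 2 * (minDeg X + minDeg Y))
include hX hY hdeg

theorem exists_reachable_card_sideClass_lt {τ : α ⊕ α ≃ α ⊕ α} {u' v' : α ⊕ α}
    (hu' : u' ∈ sideClass τ true true) (hv' : v' ∈ sideClass τ false false)
    (hne : (sideClass τ true false).Nonempty) :
    ∃ τ', (FS X Y).Reachable τ τ' ∧ τ' u' = τ u' ∧ τ' v' = τ v' ∧
      #(sideClass τ' true false) < #(sideClass τ true false) := by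
  by_cases hfix : ∃ a ∈ sideClass τ true false, ∃ b ∈ sideClass τ false true,
      X.Adj a b ∧ Y.Adj (τ a) (τ b)
  · obtain ⟨a, ha, b, hb, hXab, hYab⟩ := hfix
    obtain ⟨τ', hreach, hτ', hlt⟩ := exists_reachable_swap ha hb hXab hYab
    exact ⟨τ', hreach, hτ' u' (ne_of_mem_sideClass hu' ha (by decide))
      (ne_of_mem_sideClass hu' hb (by decide)), hτ' v' (ne_of_mem_sideClass hv' ha (by decide))
      (ne_of_mem_sideClass hv' hb (by decide)), hlt⟩
  push Not at hfix
  obtain ⟨a, ha, b, hb, hab⟩ :=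
    exists_card_bipartiteAbove_le_card_bipartiteBelow X.Adj hne (card_sideClass_true_false τ)
  simp only [bipartiteAbove, bipartiteBelow, X.adj_comm _ b] at hab
  obtain ⟨x, hx, hxu'⟩ := exists_mem_ne (two_le_card_rotation_left hX hY hdeg hfix ha hb) u'
  obtain ⟨hx, hXbx, hYax⟩ := mem_filter.1 hx
  obtain ⟨y, hy, hyv'⟩ :=
    exists_mem_ne (two_le_card_rotation_right hX hY hdeg hfix ha hb hx hab) v'
  obtain ⟨hy, hXay, hXxy, hYby, hYxy⟩ := mem_filter.1 hy
  obtain ⟨τ', hreach, hτ', hlt⟩ :=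
    exists_reachable_rotation ha hb hx hy hXxy hYxy hXay hYax hXbx hYby
  exact ⟨τ', hreach,
    hτ' u' (ne_of_mem_sideClass hu' ha (by decide)) (ne_of_mem_sideClass hu' hb (by decide))
      hxu'.symm (ne_of_mem_sideClass hu' hy (by decide)),
    hτ' v' (ne_of_mem_sideClass hv' ha (by decide)) (ne_of_mem_sideClass hv' hb (by decide))
      (ne_of_mem_sideClass hv' hx (by decide)) hyv'.symm, hlt⟩

theorem exists_reachable_sideClass_true_false_eq_empty {τ : α ⊕ α ≃ α ⊕ α} {u' v' : α ⊕ α}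
    (hu' : u' ∈ sideClass τ true true) (hv' : v' ∈ sideClass τ false false) :
    ∃ μ, (FS X Y).Reachable τ μ ∧ μ u' = τ u' ∧ μ v' = τ v' ∧ sideClass μ true false = ∅ := by
  induction hk : #(sideClass τ true false) using Nat.strong_induction_on generalizing τ with
  | _ k ih =>
    rcases (sideClass τ true false).eq_empty_or_nonempty with hempty | hne
    · exact ⟨τ, .refl τ, rfl, rfl, hempty⟩
    obtain ⟨τ', hreach, hu'τ', hv'τ', hlt⟩ :=
      exists_reachable_card_sideClass_lt hX hY hdeg hu' hv' hne
    obtain ⟨μ, hreach', hμu', hμv', hμ⟩ := ih _ (hk ▸ hlt)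
      (by rwa [mem_sideClass, hu'τ', ← mem_sideClass])
      (by rwa [mem_sideClass, hv'τ', ← mem_sideClass]) rfl
    exact ⟨μ, hreach.trans hreach', hμu'.trans hu'τ', hμv'.trans hv'τ', hμ⟩

end Iteration

theorem image_range_inl_of_sideClass_eq_empty {α : Type*} [Fintype α] {μ : α ⊕ α ≃ α ⊕ α}
    (h : sideClass μ true false = ∅) : μ '' Set.range Sum.inl = Set.range Sum.inl := by
  have hsub : μ '' Set.range Sum.inl ⊆ Set.range Sum.inl := by
    rintro _ ⟨x, hx, rfl⟩
    rw [Set.range_inl] at hx ⊢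
    by_contra hμx
    have : x ∈ sideClass μ true false := mem_sideClass.2 ⟨hx, by simpa using hμx⟩
    simp [h] at this
  exact Set.eq_of_subset_of_ncard_le hsub (Set.ncard_image_of_injective _ μ.injective).ge

theorem image_range_inr_of_sideClass_eq_empty {α : Type*} [Fintype α] {μ : α ⊕ α ≃ α ⊕ α}
    (h : sideClass μ true false = ∅) : μ '' Set.range Sum.inr = Set.range Sum.inr := by
  rw [← Set.compl_range_inl, Equiv.image_compl, image_range_inl_of_sideClass_eq_empty h]

end FriendsAndStrangers

open FriendsAndStrangers in
theorem statement19_general (r : ℕ)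
    (X Y : SimpleGraph (Fin r ⊕ Fin r))
    (hX : X ≤ completeBipartiteGraph (Fin r) (Fin r))
    (hY : Y ≤ completeBipartiteGraph (Fin r) (Fin r))
    (hdeg : 2 * (minDeg X + minDeg Y) ≥ 3 * r + 2)
    (σ : (Fin r ⊕ Fin r) ≃ (Fin r ⊕ Fin r)) (u v : Fin r ⊕ Fin r)
    (hu : u ∈ Set.range (Sum.inl : Fin r → Fin r ⊕ Fin r))
    (hv : v ∈ Set.range (Sum.inr : Fin r → Fin r ⊕ Fin r))
    (hu' : σ.symm u ∈ Set.range (Sum.inl : Fin r → Fin r ⊕ Fin r))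
    (hv' : σ.symm v ∈ Set.range (Sum.inr : Fin r → Fin r ⊕ Fin r)) :
    ∃ μ : (Fin r ⊕ Fin r) ≃ (Fin r ⊕ Fin r),
      (FS X Y).Reachable σ μ ∧
      ⇑μ '' Set.range (Sum.inl : Fin r → Fin r ⊕ Fin r) =
        Set.range (Sum.inl : Fin r → Fin r ⊕ Fin r) ∧
      ⇑μ '' Set.range (Sum.inr : Fin r → Fin r ⊕ Fin r) =
        Set.range (Sum.inr : Fin r → Fin r ⊕ Fin r) ∧
      μ (σ.symm u) = u ∧ μ (σ.symm v) = v := by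
  rw [Set.range_inl] at hu hu'
  rw [Set.range_inr] at hv hv'
  obtain ⟨μ, hreach, hμu, hμv, hμ⟩ := exists_reachable_sideClass_true_false_eq_empty hX hY
    (by simpa using hdeg) (τ := σ) (u' := σ.symm u) (v' := σ.symm v)
    (mem_sideClass.2 ⟨hu', by simpa using hu⟩)
    (mem_sideClass.2 ⟨by simpa using hv', by simpa using hv⟩)
  exact ⟨μ, hreach, image_range_inl_of_sideClass_eq_empty hμ,
    image_range_inr_of_sideClass_eq_empty hμ, by simpa using hμu, by simpa using hμv⟩

theorem statement19 (r : ℕ) (hr : 2 ≤ r)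
    (X Y : SimpleGraph (Fin r ⊕ Fin r))
    (hX : X ≤ completeBipartiteGraph (Fin r) (Fin r))
    (hY : Y ≤ completeBipartiteGraph (Fin r) (Fin r))
    (hdeg : 2 * (minDeg X + minDeg Y) ≥ 3 * r + 2)
    (σ : (Fin r ⊕ Fin r) ≃ (Fin r ⊕ Fin r)) (u v : Fin r ⊕ Fin r)
    (hu : u ∈ Set.range (Sum.inl : Fin r → Fin r ⊕ Fin r))
    (hv : v ∈ Set.range (Sum.inr : Fin r → Fin r ⊕ Fin r))
    (hu' : σ.symm u ∈ Set.range (Sum.inl : Fin r → Fin r ⊕ Fin r))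
    (hv' : σ.symm v ∈ Set.range (Sum.inr : Fin r → Fin r ⊕ Fin r))
    (hadj : X.Adj (σ.symm u) (σ.symm v))
    (hcount : r - 1 ≤ 2 * ((Set.range (Sum.inl : Fin r → Fin r ⊕ Fin r) \ {σ.symm u}) ∩
        (⇑σ ⁻¹' (Set.range (Sum.inl : Fin r → Fin r ⊕ Fin r) \ {u}))).ncard) :
    ∃ μ : (Fin r ⊕ Fin r) ≃ (Fin r ⊕ Fin r),
      (FS X Y).Reachable σ μ ∧
      ⇑μ '' Set.range (Sum.inl : Fin r → Fin r ⊕ Fin r) =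
        Set.range (Sum.inl : Fin r → Fin r ⊕ Fin r) ∧
      ⇑μ '' Set.range (Sum.inr : Fin r → Fin r ⊕ Fin r) =
        Set.range (Sum.inr : Fin r → Fin r ⊕ Fin r) ∧
      μ (σ.symm u) = u ∧ μ (σ.symm v) = v :=
  statement19_general r X Y hX hY hdeg σ u v hu hv hu' hv'
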